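/- arXiv:2206.03889 — 2 statements merged into one kernel-verified Lean document; each statement's English description precedes it below -/
import Mathlib

section
/- For the two-dimensional compressible Euler equations with adiabatic constant γ > 1: on the domain of states U = (ρ, m₁, m₂, E) ∈ ℝ⁴ with ρ > 0 and p := (γ−1)·(E − (m₁² + m₂²)/(2ρ)) > 0, the Jacobian of the entropy variable map v(U) := −(ρ·p)^{−γ/(γ+1)}·(E, −m₁, −m₂, ρ)ᵀ equals (γ(γ−1)/(γ+1))·(ρp)^{−(2γ+1)/(γ+1)}·w·wᵀ − (ρp)^{−γ/(γ+1)}·K, where w := (E, −m₁, −m₂, ρ)ᵀ and K is the 4×4 matrix [[0,0,0,1],[0,−1,0,0],[0,0,−1,0],[1,0,0,0]]. -/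
/-!
With `K` the exchange matrix, `ρ p = (γ-1)/2 · Uᵀ K U` is a quadratic form and
`w = (E, -m₁, -m₂, ρ) = K U`, so `v = -q^{-a} • K U` with `q = ρ p` and `a = γ/(γ+1)`.
Since `K` is symmetric, `dq = (γ-1) ⟪K U, ·⟫`, and the product and chain rules give
`dv = a (γ-1) q^{-a-1} w wᵀ - q^{-a} K`; finally `a (γ-1) = γ(γ-1)/(γ+1)` and
`-a-1 = -(2γ+1)/(γ+1)`.
-/

open Matrix

variable {n : Type*} [Fintype n]

theorem hasFDerivAt_dotProduct_mulVec_self (A : Matrix n n ℝ) (x : n → ℝ) :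
    HasFDerivAt (fun y => y ⬝ᵥ A *ᵥ y)
      ((dotProductBilin ℝ ℝ).toContinuousBilinearMap ((A + Aᵀ) *ᵥ x)) x := by
  refine ((dotProductBilin ℝ ℝ).toContinuousBilinearMap.hasFDerivAt_of_bilinear
    (hasFDerivAt_id x) (mulVecLin A).toContinuousLinearMap.hasFDerivAt).congr_fderiv ?_
  ext y
  simp [add_mulVec, dotProduct_comm y, dotProduct_mulVec, mulVec_transpose, add_comm]

theorem hasFDerivAt_neg_rpow_quadForm_smul_mulVec (A : Matrix n n ℝ) (hA : Aᵀ = A)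
    (c a : ℝ) (x : n → ℝ) (hx : c * (x ⬝ᵥ A *ᵥ x) ≠ 0) :
    HasFDerivAt (fun y => -(c * (y ⬝ᵥ A *ᵥ y)) ^ (-a) • A *ᵥ y)
      (mulVecLin ((2 * a * c * (c * (x ⬝ᵥ A *ᵥ x)) ^ (-a - 1)) • vecMulVec (A *ᵥ x) (A *ᵥ x)
        - (c * (x ⬝ᵥ A *ᵥ x)) ^ (-a) • A)).toContinuousLinearMap x := by
  have hq := ((hasFDerivAt_dotProduct_mulVec_self A x).const_mul c).rpow_const (p := -a) (Or.inl hx)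
  refine (hq.neg.smul (mulVecLin A).toContinuousLinearMap.hasFDerivAt).congr_fderiv ?_
  ext y i
  simp [hA, add_mulVec, vecMulVec_mulVec]
  ring

def exchangeMatrix : Matrix (Fin 4) (Fin 4) ℝ :=
  of ![![0, 0, 0, 1], ![0, -1, 0, 0], ![0, 0, -1, 0], ![1, 0, 0, 0]]

theorem exchangeMatrix_transpose : exchangeMatrixᵀ = exchangeMatrix := by
  ext i j
  fin_cases i <;> fin_cases j <;> rfl

theorem exchangeMatrix_mulVec (U : Fin 4 → ℝ) :
    exchangeMatrix *ᵥ U = ![U 3, -U 1, -U 2, U 0] := by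
  ext i
  fin_cases i <;> simp [exchangeMatrix, mulVec, dotProduct, Fin.sum_univ_four]

theorem density_mul_pressure_eq (gam : ℝ) (U : Fin 4 → ℝ) (hρ : U 0 ≠ 0) :
    U 0 * ((gam - 1) * (U 3 - (U 1 ^ 2 + U 2 ^ 2) / (2 * U 0))) =
      (gam - 1) / 2 * (U ⬝ᵥ exchangeMatrix *ᵥ U) := by
  rw [exchangeMatrix_mulVec]
  simp [dotProduct, Fin.sum_univ_four]
  field_simp
  ring

/-- The Jacobian of the Euler entropy variable map
`v(U) = -(ρp)^{-γ/(γ+1)}·(E,-m₁,-m₂,ρ)ᵀ` equals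
`(γ(γ-1)/(γ+1))·(ρp)^{-(2γ+1)/(γ+1)}·w wᵀ - (ρp)^{-γ/(γ+1)}·K` with
`w = (E,-m₁,-m₂,ρ)ᵀ` and `K = [[0,0,0,1],[0,-1,0,0],[0,0,-1,0],[1,0,0,0]]`. -/
theorem stmt_15 (gam : ℝ) (hgam : 1 < gam)
    (p : (Fin 4 → ℝ) → ℝ)
    (hp : ∀ U : Fin 4 → ℝ,
      p U = (gam - 1) * (U 3 - ((U 1) ^ 2 + (U 2) ^ 2) / (2 * U 0)))
    (v : (Fin 4 → ℝ) → (Fin 4 → ℝ))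
    (hv : ∀ U : Fin 4 → ℝ,
      v U = (-((U 0 * p U) ^ (-gam / (gam + 1)))) • ![U 3, -U 1, -U 2, U 0])
    (K : Matrix (Fin 4) (Fin 4) ℝ)
    (hK : K = Matrix.of ![![0, 0, 0, 1], ![0, -1, 0, 0], ![0, 0, -1, 0], ![1, 0, 0, 0]]) :
    ∀ U : Fin 4 → ℝ, 0 < U 0 → 0 < p U →
      ∃ Dv : (Fin 4 → ℝ) →L[ℝ] (Fin 4 → ℝ), HasFDerivAt v Dv U ∧
        ∀ y : Fin 4 → ℝ,
          Dv y = (((gam * (gam - 1) / (gam + 1)) * (U 0 * p U) ^ (-(2 * gam + 1) / (gam + 1))) •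
              Matrix.of (fun i j => ![U 3, -U 1, -U 2, U 0] i * ![U 3, -U 1, -U 2, U 0] j)
            - ((U 0 * p U) ^ (-gam / (gam + 1))) • K).mulVec y := by
  intro U hρ hpU
  obtain rfl : K = exchangeMatrix := hK
  have hρp : U 0 * p U = (gam - 1) / 2 * (U ⬝ᵥ exchangeMatrix *ᵥ U) := by
    rw [hp, density_mul_pressure_eq gam U hρ.ne']
  have hv_local : v =ᶠ[nhds U] fun y =>
      -((gam - 1) / 2 * (y ⬝ᵥ exchangeMatrix *ᵥ y)) ^ (-(gam / (gam + 1))) • exchangeMatrix *ᵥ y := by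
    filter_upwards [(isOpen_lt continuous_const (continuous_apply 0)).mem_nhds hρ] with y hy
    rw [hv, hp, density_mul_pressure_eq gam y (hy.ne'), exchangeMatrix_mulVec, neg_div]
  refine ⟨_, (hasFDerivAt_neg_rpow_quadForm_smul_mulVec exchangeMatrix exchangeMatrix_transpose
    _ _ U (hρp ▸ (mul_pos hρ hpU).ne')).congr_of_eventuallyEq hv_local, fun y => ?_⟩
  have hgam1 : gam + 1 ≠ 0 := by linarith
  have hexp : -(2 * gam + 1) / (gam + 1) = -(gam / (gam + 1)) - 1 := by
    field_simp
    ring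
  have hcoeff : 2 * (gam / (gam + 1)) * ((gam - 1) / 2) = gam * (gam - 1) / (gam + 1) := by ring
  rw [← hρp, exchangeMatrix_mulVec, hexp, neg_div, ← hcoeff]
  rfl
end

section
/- Let γ > 1, let ρ > 0, u, v ∈ ℝ, and E ∈ ℝ be such that p := (γ−1)·(E − ρ·(u²+v²)/2) > 0; set k := (u²+v²)/2. Then the 4×4 matrix A₀ := γ·ρ·(ρ·p)^{−1/(γ+1)}·[[ρ, ρu, ρv, ρk + p/(γ(γ−1))], [ρu, E − p/(γ(γ−1)) + ρ(u²−v²)/2, ρuv, uE], [ρv, ρuv, E − p/(γ(γ−1)) − ρ(u²−v²)/2, vE], [ρk + p/(γ(γ−1)), Eu, Ev, E²/ρ]] is the inverse of the matrix B := (γ(γ−1)/(γ+1))·(ρp)^{−(2γ+1)/(γ+1)}·w·wᵀ − (ρp)^{−γ/(γ+1)}·K, where w := (E, −ρu, −ρv, ρ)ᵀ and K := [[0,0,0,1],[0,−1,0,0],[0,0,−1,0],[1,0,0,0]]; i.e. A₀·B = I₄ and B·A₀ = I₄. -/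
/-!
Both matrices are rank-one perturbations of the signed exchange matrix `K`, which is a symmetric
involution. With `s = ρp` and `r = s^(-1/(γ+1))`, the rpow factors combine as
`r · s^(-(2γ+1)/(γ+1)) = s⁻²` and `r · s^(-γ/(γ+1)) = s⁻¹`, and the bracketed matrix of `A₀`
equals `γ (Kw)(Kw)ᵀ - s K`. Multiplying `γ (Kw)(Kw)ᵀ - s K` by `c (w wᵀ) - d K` only produces
multiples of `(Kw) wᵀ` and of `K² = 1`; the coefficient of `(Kw) wᵀ` vanishes because
`wᵀ K w = 2ρ(E - ρk) = 2s/(γ-1)`. A one-sided inverse of a square matrix is two-sided.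
-/

open Matrix

theorem smul_vecMulVec_sub_smul_mul_eq_one {R n : Type*} [CommRing R] [Fintype n] [DecidableEq n]
    {K : Matrix n n R} (hK : K * K = 1) (hKt : Kᵀ = K) (w : n → R) {a b c d : R}
    (hbd : b * d = 1) (hcoef : a * c * (w ⬝ᵥ K *ᵥ w) = a * d + b * c) :
    (a • vecMulVec (K *ᵥ w) (K *ᵥ w) - b • K) * (c • vecMulVec w w - d • K) = 1 := by
  have hzK : (K *ᵥ w) ᵥ* K = w := by
    rw [← mulVec_transpose, hKt, mulVec_mulVec, hK, one_mulVec]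
  calc _ = (a * c * (w ⬝ᵥ K *ᵥ w) - a * d - b * c) • vecMulVec (K *ᵥ w) w + (b * d) • (K * K) := by
        rw [sub_mul, mul_sub, mul_sub]
        simp only [Matrix.smul_mul, Matrix.mul_smul, vecMulVec_mul_vecMulVec, smul_smul]
        rw [vecMulVec_mul, hzK, mul_vecMulVec, dotProduct_comm (K *ᵥ w) w, vecMulVec_smul, smul_smul]
        module
    _ = 1 := by rw [hcoef, hbd, hK]; simp

def eulerK (R : Type*) [Ring R] : Matrix (Fin 4) (Fin 4) R :=
  !![0, 0, 0, 1; 0, -1, 0, 0; 0, 0, -1, 0; 1, 0, 0, 0]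

theorem eulerK_mul_self (R : Type*) [Ring R] : eulerK R * eulerK R = 1 := by
  ext i j; fin_cases i <;> fin_cases j <;> simp [eulerK, Matrix.mul_apply, Fin.sum_univ_four]

theorem eulerK_transpose (R : Type*) [Ring R] : (eulerK R)ᵀ = eulerK R := by
  ext i j; fin_cases i <;> fin_cases j <;> simp [eulerK]

theorem eulerK_mulVec {R : Type*} [Ring R] (x : Fin 4 → R) :
    eulerK R *ᵥ x = ![x 3, -x 1, -x 2, x 0] := by
  ext i; fin_cases i <;> simp [eulerK, mulVec, dotProduct, Fin.sum_univ_four]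

theorem dotProduct_eulerK_mulVec {R : Type*} [CommRing R] (x : Fin 4 → R) :
    x ⬝ᵥ eulerK R *ᵥ x = 2 * x 0 * x 3 - x 1 ^ 2 - x 2 ^ 2 := by
  rw [eulerK_mulVec, dotProduct, Fin.sum_univ_four]
  simp only [cons_val]
  ring

theorem Real.rpow_mul_rpow_eq_inv_pow {s x y : ℝ} (hs : 0 < s) (n : ℕ) (h : x + y = -n) :
    s ^ x * s ^ y = (s ^ n)⁻¹ := by
  rw [← Real.rpow_add hs, h, Real.rpow_neg hs.le, Real.rpow_natCast]

theorem euler_A₀_eq_smul_vecMulVec_sub {γ ρ u v E p : ℝ} (hγ : γ ≠ 0) (hγ1 : γ - 1 ≠ 0) (hρ : ρ ≠ 0)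
    (hp : p = (γ - 1) * (E - ρ * (u ^ 2 + v ^ 2) / 2)) :
    (γ * ρ) • Matrix.of
        ![![ρ, ρ * u, ρ * v, ρ * ((u ^ 2 + v ^ 2) / 2) + p / (γ * (γ - 1))],
          ![ρ * u, E - p / (γ * (γ - 1)) + ρ * (u ^ 2 - v ^ 2) / 2, ρ * u * v, u * E],
          ![ρ * v, ρ * u * v, E - p / (γ * (γ - 1)) - ρ * (u ^ 2 - v ^ 2) / 2, v * E],
          ![ρ * ((u ^ 2 + v ^ 2) / 2) + p / (γ * (γ - 1)), E * u, E * v, E ^ 2 / ρ]] =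
      γ • vecMulVec ![ρ, ρ * u, ρ * v, E] ![ρ, ρ * u, ρ * v, E] - (ρ * p) • eulerK ℝ := by
  subst hp
  ext i j
  fin_cases i <;> fin_cases j <;> simp [eulerK, vecMulVec] <;> field_simp <;> ring

/-- For the 2D Euler equations, the explicit matrix `A₀` from the paper is the inverse
of the Jacobian `B = ∂_U v` of the entropy variables, i.e. `A₀ B = I` and `B A₀ = I`. -/
theorem stmt_16 (gam : ℝ) (hgam : 1 < gam)
    (ρ u v E : ℝ) (hρ : 0 < ρ)
    (k : ℝ) (hk : k = (u ^ 2 + v ^ 2) / 2)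
    (p : ℝ) (hp : p = (gam - 1) * (E - ρ * (u ^ 2 + v ^ 2) / 2)) (hppos : 0 < p)
    (w : Fin 4 → ℝ) (hw : w = ![E, -(ρ * u), -(ρ * v), ρ])
    (K : Matrix (Fin 4) (Fin 4) ℝ)
    (hK : K = Matrix.of ![![0, 0, 0, 1], ![0, -1, 0, 0], ![0, 0, -1, 0], ![1, 0, 0, 0]])
    (A₀ : Matrix (Fin 4) (Fin 4) ℝ)
    (hA : A₀ = (gam * ρ * (ρ * p) ^ (-1 / (gam + 1))) •
      Matrix.of
        ![![ρ, ρ * u, ρ * v, ρ * k + p / (gam * (gam - 1))],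
          ![ρ * u, E - p / (gam * (gam - 1)) + ρ * (u ^ 2 - v ^ 2) / 2, ρ * u * v, u * E],
          ![ρ * v, ρ * u * v, E - p / (gam * (gam - 1)) - ρ * (u ^ 2 - v ^ 2) / 2, v * E],
          ![ρ * k + p / (gam * (gam - 1)), E * u, E * v, E ^ 2 / ρ]])
    (B : Matrix (Fin 4) (Fin 4) ℝ)
    (hB : B = ((gam * (gam - 1) / (gam + 1)) * (ρ * p) ^ (-(2 * gam + 1) / (gam + 1))) •
        Matrix.of (fun i j => w i * w j)
      - ((ρ * p) ^ (-gam / (gam + 1))) • K) :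
    A₀ * B = 1 ∧ B * A₀ = 1 := by
  subst hk
  replace hK : K = eulerK ℝ := hK
  have hγ1 : gam - 1 ≠ 0 := by linarith
  have hs : 0 < ρ * p := mul_pos hρ hppos
  set r := (ρ * p) ^ (-1 / (gam + 1))
  have hr : r ≠ 0 := (Real.rpow_pos_of_pos hs _).ne'
  have ht2 : (ρ * p) ^ (-(2 * gam + 1) / (gam + 1)) = ((ρ * p) ^ 2)⁻¹ / r :=
    eq_div_of_mul_eq hr (Real.rpow_mul_rpow_eq_inv_pow hs 2 (by field_simp; ring))
  have ht1 : (ρ * p) ^ (-gam / (gam + 1)) = ((ρ * p) ^ 1)⁻¹ / r :=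
    eq_div_of_mul_eq hr (Real.rpow_mul_rpow_eq_inv_pow hs 1 (by field_simp; ring))
  have hz : eulerK ℝ *ᵥ w = ![ρ, ρ * u, ρ * v, E] := by
    simp [hw, eulerK_mulVec]
  have hq : w ⬝ᵥ eulerK ℝ *ᵥ w = 2 * (ρ * p) / (gam - 1) := by
    rw [dotProduct_eulerK_mulVec, hw, hp]
    simp only [cons_val]
    field_simp
    ring
  have hAB : A₀ * B = 1 := by
    rw [hA, mul_comm, mul_smul, euler_A₀_eq_smul_vecMulVec_sub (by positivity) hγ1 hρ.ne' hp, ← hz,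
      smul_sub, smul_smul, smul_smul, hB, hK, ht1, ht2]
    apply smul_vecMulVec_sub_smul_mul_eq_one (eulerK_mul_self ℝ) (eulerK_transpose ℝ)
    · field_simp
    · rw [hq]; field_simp; ring
  exact ⟨hAB, mul_eq_one_comm.mp hAB⟩
end
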